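/- Let (G, ⊆ₑ, s_{GES}) be an E-MCS Model with respect to MCS Models M_V = (Σ_V, ≼_{Σ_V}, s_{Σ_V}) and M_E = (Σ_E, ≼_{Σ_E}, s_{Σ_E}) with strictly positive size functions, let n ≥ 1, and let K_n ⊆ G be the subset of complete graphs with exactly n vertices. Then the restriction (K_n, ≼_{K_n}, s_{K_n}) of (⊆ₑ, s_{GES}) to K_n is again an MCS Model: ≼_{K_n} is a partial order, s_{K_n} satisfies (S1) and (S2), any two elements of K_n have a common subelement in K_n of maximal size (A1), and the diamond inequality (A2) holds within K_n. -/
import Mathlib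


/-- A finite labeled graph with vertex labels in `LV` and edge labels in `LE`.
Vertices are drawn from `ℕ`; label functions are total on `ℕ` resp. `Sym2 ℕ`
(only the values on actual vertices and edges are relevant). -/
structure LGraph (LV LE : Type) where
  verts : Finset ℕ
  edges : Finset (Sym2 ℕ)
  edges_sub : ∀ e ∈ edges, ∀ v ∈ e, v ∈ verts
  edges_nodiag : ∀ e ∈ edges, ¬ e.IsDiag
  ℓV : ℕ → LV
  ℓE : Sym2 ℕ → LE

/-- Label-preserving isomorphism of labeled graphs. -/
def LGraph.Iso {LV LE : Type} (g₁ g₂ : LGraph LV LE) : Prop :=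
  ∃ φ : ℕ → ℕ,
    Set.BijOn φ ↑g₁.verts ↑g₂.verts ∧
    (∀ u ∈ g₁.verts, ∀ v ∈ g₁.verts, (s(u, v) ∈ g₁.edges ↔ s(φ u, φ v) ∈ g₂.edges)) ∧
    (∀ v ∈ g₁.verts, g₂.ℓV (φ v) = g₁.ℓV v) ∧
    (∀ u ∈ g₁.verts, ∀ v ∈ g₁.verts, s(u, v) ∈ g₁.edges →
      g₂.ℓE s(φ u, φ v) = g₁.ℓE s(u, v))

/-- `g'` is an extended subgraph of `g` with respect to the label partial
orders `leV` on `LV` and `leE` on `LE`. -/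
def LGraph.IsExtSubgraph {LV LE : Type} (leV : LV → LV → Prop)
    (leE : LE → LE → Prop) (g' g : LGraph LV LE) : Prop :=
  g'.verts ⊆ g.verts ∧ g'.edges ⊆ g.edges ∧
  (∀ v ∈ g'.verts, leV (g'.ℓV v) (g.ℓV v)) ∧
  (∀ e ∈ g'.edges, leE (g'.ℓE e) (g.ℓE e))

/-- `g ⊆ₑ h` (extended subgraph isomorphism): some extended subgraph of `h`
is isomorphic to `g`. -/
def LGraph.ExtSubIso {LV LE : Type} (leV : LV → LV → Prop)
    (leE : LE → LE → Prop) (g h : LGraph LV LE) : Prop :=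
  ∃ g'' : LGraph LV LE, LGraph.IsExtSubgraph leV leE g'' h ∧ LGraph.Iso g'' g

/-- The size function `s_{GES}` of an E-MCS Model: the sum of the sizes of all
vertex labels plus the sum of the sizes of all edge labels (it vanishes on the
empty graph, since both sums are then empty). -/
def LGraph.sizeGES {LV LE : Type} (sV : LV → ℝ) (sE : LE → ℝ)
    (g : LGraph LV LE) : ℝ :=
  ∑ v ∈ g.verts, sV (g.ℓV v) + ∑ e ∈ g.edges, sE (g.ℓE e)

/-- `g` is a complete graph with exactly `n` vertices. -/
def LGraph.IsCompleteN {LV LE : Type} (n : ℕ) (g : LGraph LV LE) : Prop :=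
  g.verts.card = n ∧
  ∀ u ∈ g.verts, ∀ v ∈ g.verts, u ≠ v → s(u, v) ∈ g.edges

section AuxLemmas

namespace LGraphAux
open LGraph
variable {LV LE : Type} {n : ℕ}

lemma mem_edges_iff {g : LGraph LV LE} (hg : g.IsCompleteN n) {u v : ℕ} :
    s(u, v) ∈ g.edges ↔ u ∈ g.verts ∧ v ∈ g.verts ∧ u ≠ v := by
  constructor
  · intro h
    refine ⟨g.edges_sub _ h u (by simp), g.edges_sub _ h v (by simp), ?_⟩
    intro huv
    exact g.edges_nodiag _ h (by simp [huv])
  · rintro ⟨hu, hv, huv⟩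
    exact hg.2 u hu v hv huv

/-- `Sub g₁ g₂`: there is a bijection `ψ` from the vertices of `g₂` to those of
`g₁` decreasing all labels. For complete graphs this is equivalent to `⊆ₑ`. -/
def Sub (leV : LV → LV → Prop) (leE : LE → LE → Prop) (g₁ g₂ : LGraph LV LE) : Prop :=
  ∃ ψ : ℕ → ℕ, Set.BijOn ψ ↑g₂.verts ↑g₁.verts ∧
    (∀ v ∈ g₂.verts, leV (g₁.ℓV (ψ v)) (g₂.ℓV v)) ∧
    (∀ u ∈ g₂.verts, ∀ v ∈ g₂.verts, u ≠ v → leE (g₁.ℓE s(ψ u, ψ v)) (g₂.ℓE s(u, v)))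

variable {leV : LV → LV → Prop} {leE : LE → LE → Prop}

/-- From a label-decreasing bijection, build the extended subgraph witness. -/
lemma sub_imp_extSubIso {g₁ g₂ : LGraph LV LE} (hg₁ : g₁.IsCompleteN n)
    (hg₂ : g₂.IsCompleteN n) (h : Sub leV leE g₁ g₂) :
    LGraph.ExtSubIso leV leE g₁ g₂ := by
  obtain ⟨ψ, hψ, hV, hE⟩ := h
  refine ⟨⟨g₂.verts, g₂.edges, g₂.edges_sub, g₂.edges_nodiag,
      fun v => g₁.ℓV (ψ v), fun e => g₁.ℓE (e.map ψ)⟩,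
    ⟨subset_rfl, subset_rfl, hV, ?_⟩, ψ, hψ, ?_, fun v _ => rfl, ?_⟩
  · intro e he
    induction e using Sym2.ind with
    | _ u v =>
      obtain ⟨hu, hv, huv⟩ := (mem_edges_iff hg₂).1 he
      simpa [Sym2.map_pair_eq] using hE u hu v hv huv
  · intro u hu v hv
    rw [mem_edges_iff hg₂, mem_edges_iff hg₁]
    constructor
    · rintro ⟨_, _, huv⟩
      exact ⟨hψ.mapsTo hu, hψ.mapsTo hv, fun h => huv (hψ.injOn hu hv h)⟩
    · rintro ⟨_, _, huv⟩
      exact ⟨hu, hv, fun h => huv (by rw [h])⟩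
  · intro u hu v hv _
    simp [Sym2.map_pair_eq]

lemma extSubIso_imp_sub {g₁ g₂ : LGraph LV LE} (hg₁ : g₁.IsCompleteN n)
    (hg₂ : g₂.IsCompleteN n) (h : LGraph.ExtSubIso leV leE g₁ g₂) :
    Sub leV leE g₁ g₂ := by
  obtain ⟨g'', ⟨hvs, hes, hlV, hlE⟩, φ, hφ, hiff, hV, hE⟩ := h
  have hc : g''.verts.card = g₁.verts.card :=
    Finset.card_bij (fun a _ => φ a) (fun a ha => hφ.mapsTo ha)
      (fun a ha b hb hab => hφ.injOn ha hb hab)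
      (fun b hb => by obtain ⟨a, ha, rfl⟩ := hφ.surjOn hb; exact ⟨a, ha, rfl⟩)
  have hcard : g''.verts = g₂.verts := by
    apply Finset.eq_of_subset_of_card_le hvs
    rw [hg₂.1, hc, hg₁.1]
  refine ⟨φ, by rw [← hcard]; exact hφ, ?_, ?_⟩
  · intro v hv
    have hv'' : v ∈ g''.verts := hcard ▸ hv
    rw [hV v hv'']
    exact hlV v hv''
  · intro u hu v hv huv
    have hu : u ∈ g''.verts := hcard ▸ hu
    have hv : v ∈ g''.verts := hcard ▸ hv
    have hmem : s(φ u, φ v) ∈ g₁.edges :=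
      (mem_edges_iff hg₁).2 ⟨hφ.mapsTo hu, hφ.mapsTo hv,
        fun h => huv (hφ.injOn hu hv h)⟩
    have hmem' : s(u, v) ∈ g''.edges := (hiff u hu v hv).2 hmem
    rw [hE u hu v hv hmem']
    exact hlE _ hmem'

lemma sub_iff_extSubIso {g₁ g₂ : LGraph LV LE} (hg₁ : g₁.IsCompleteN n)
    (hg₂ : g₂.IsCompleteN n) :
    LGraph.ExtSubIso leV leE g₁ g₂ ↔ Sub leV leE g₁ g₂ :=
  ⟨extSubIso_imp_sub hg₁ hg₂, sub_imp_extSubIso hg₁ hg₂⟩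

/-- Transport of a vertex sum along the bijection. -/
lemma sum_verts {g₁ g₂ : LGraph LV LE} {ψ : ℕ → ℕ}
    (hψ : Set.BijOn ψ ↑g₂.verts ↑g₁.verts) (f : ℕ → ℝ) :
    ∑ v ∈ g₁.verts, f v = ∑ v ∈ g₂.verts, f (ψ v) := by
  refine (Finset.sum_bij (fun v _ => ψ v) ?_ ?_ ?_ (fun _ _ => rfl)).symm
  · intro a ha; exact hψ.mapsTo ha
  · intro a ha b hb hab; exact hψ.injOn ha hb hab
  · intro b hb
    obtain ⟨a, ha, rfl⟩ := hψ.surjOn hb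
    exact ⟨a, ha, rfl⟩

/-- Transport of an edge sum along the bijection, for complete graphs. -/
lemma sum_edges {g₁ g₂ : LGraph LV LE} (hg₁ : g₁.IsCompleteN n)
    (hg₂ : g₂.IsCompleteN n) {ψ : ℕ → ℕ}
    (hψ : Set.BijOn ψ ↑g₂.verts ↑g₁.verts) (f : Sym2 ℕ → ℝ) :
    ∑ e ∈ g₁.edges, f e = ∑ e ∈ g₂.edges, f (e.map ψ) := by
  refine (Finset.sum_bij (fun e _ => e.map ψ) ?_ ?_ ?_ (fun _ _ => rfl)).symm
  · intro e he
    induction e using Sym2.ind with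
    | _ u v =>
      obtain ⟨hu, hv, huv⟩ := (mem_edges_iff hg₂).1 he
      simp only [Sym2.map_pair_eq]
      exact (mem_edges_iff hg₁).2 ⟨hψ.mapsTo hu, hψ.mapsTo hv,
        fun h => huv (hψ.injOn hu hv h)⟩
  · intro e₁ he₁ e₂ he₂ heq
    induction e₁ using Sym2.ind with
    | _ u₁ v₁ =>
      induction e₂ using Sym2.ind with
      | _ u₂ v₂ =>
        obtain ⟨hu₁, hv₁, -⟩ := (mem_edges_iff hg₂).1 he₁
        obtain ⟨hu₂, hv₂, -⟩ := (mem_edges_iff hg₂).1 he₂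
        simp only [Sym2.map_pair_eq, Sym2.eq_iff] at heq
        rw [Sym2.eq_iff]
        rcases heq with ⟨h1, h2⟩ | ⟨h1, h2⟩
        · exact Or.inl ⟨hψ.injOn hu₁ hu₂ h1, hψ.injOn hv₁ hv₂ h2⟩
        · exact Or.inr ⟨hψ.injOn hu₁ hv₂ h1, hψ.injOn hv₁ hu₂ h2⟩
  · intro e he
    induction e using Sym2.ind with
    | _ a b =>
      obtain ⟨ha, hb, hab⟩ := (mem_edges_iff hg₁).1 he
      obtain ⟨u, hu, rfl⟩ := hψ.surjOn ha
      obtain ⟨v, hv, rfl⟩ := hψ.surjOn hb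
      have huv : u ≠ v := fun h => hab (by rw [h])
      exact ⟨s(u, v), (mem_edges_iff hg₂).2 ⟨hu, hv, huv⟩, Sym2.map_pair_eq ψ u v⟩

lemma size_eq {g₁ g₂ : LGraph LV LE} (hg₁ : g₁.IsCompleteN n)
    (hg₂ : g₂.IsCompleteN n) {ψ : ℕ → ℕ}
    (hψ : Set.BijOn ψ ↑g₂.verts ↑g₁.verts) (sV : LV → ℝ) (sE : LE → ℝ) :
    g₁.sizeGES sV sE =
      ∑ v ∈ g₂.verts, sV (g₁.ℓV (ψ v)) + ∑ e ∈ g₂.edges, sE (g₁.ℓE (e.map ψ)) := by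
  rw [LGraph.sizeGES, sum_verts hψ (fun v => sV (g₁.ℓV v)),
    sum_edges hg₁ hg₂ hψ (fun e => sE (g₁.ℓE e))]

/-- Symmetry of `Iso`. -/
lemma iso_symm {g₁ g₂ : LGraph LV LE} (h : g₁.Iso g₂) : g₂.Iso g₁ := by
  obtain ⟨φ, hφ, hiff, hV, hE⟩ := h
  set φ' := Function.invFunOn φ ↑g₁.verts with hφ'def
  have hinv : Set.InvOn φ' φ ↑g₁.verts ↑g₂.verts := hφ.invOn_invFunOn
  have hbij : Set.BijOn φ' ↑g₂.verts ↑g₁.verts := Set.BijOn.symm hinv.symm hφ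
  have hfix : ∀ v ∈ g₂.verts, φ (φ' v) = v := fun v hv => hinv.2 hv
  refine ⟨φ', hbij, ?_, ?_, ?_⟩
  · intro u hu v hv
    have := hiff (φ' u) (hbij.mapsTo hu) (φ' v) (hbij.mapsTo hv)
    rw [hfix u hu, hfix v hv] at this
    exact this.symm
  · intro v hv
    have := hV (φ' v) (hbij.mapsTo hv)
    rw [hfix v hv] at this
    exact this.symm
  · intro u hu v hv he
    have hu' := hbij.mapsTo hu
    have hv' := hbij.mapsTo hv
    have he' : s(φ' u, φ' v) ∈ g₁.edges := by
      rw [hiff (φ' u) hu' (φ' v) hv', hfix u hu, hfix v hv]; exact he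
    have := hE (φ' u) hu' (φ' v) hv' he'
    rw [hfix u hu, hfix v hv] at this
    exact this.symm

/-- A label-preserving vertex bijection between complete graphs gives `Iso`. -/
lemma iso_of_labels {g₁ g₂ : LGraph LV LE} (hg₁ : g₁.IsCompleteN n)
    (hg₂ : g₂.IsCompleteN n) {ψ : ℕ → ℕ}
    (hψ : Set.BijOn ψ ↑g₂.verts ↑g₁.verts)
    (hV : ∀ v ∈ g₂.verts, g₁.ℓV (ψ v) = g₂.ℓV v)
    (hE : ∀ u ∈ g₂.verts, ∀ v ∈ g₂.verts, u ≠ v →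
      g₁.ℓE s(ψ u, ψ v) = g₂.ℓE s(u, v)) : g₁.Iso g₂ := by
  apply iso_symm
  refine ⟨ψ, hψ, ?_, hV, ?_⟩
  · intro u hu v hv
    rw [mem_edges_iff hg₂, mem_edges_iff hg₁]
    constructor
    · rintro ⟨-, -, huv⟩
      exact ⟨hψ.mapsTo hu, hψ.mapsTo hv, fun h => huv (hψ.injOn hu hv h)⟩
    · rintro ⟨-, -, huv⟩
      exact ⟨hu, hv, fun h => huv (by rw [h])⟩
  · intro u hu v hv he
    obtain ⟨-, -, huv⟩ := (mem_edges_iff hg₂).1 he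
    exact hE u hu v hv huv

end LGraphAux


namespace LGraphAux
open LGraph
variable {LV LE : Type} {n : ℕ} {leV : LV → LV → Prop} {leE : LE → LE → Prop}
variable {sV : LV → ℝ} {sE : LE → ℝ}

lemma size_le {g₁ g₂ : LGraph LV LE} (hg₁ : g₁.IsCompleteN n)
    (hg₂ : g₂.IsCompleteN n)
    (hVS1 : ∀ a b, leV a b → sV a ≤ sV b) (hES1 : ∀ a b, leE a b → sE a ≤ sE b)
    (h : Sub leV leE g₁ g₂) : g₁.sizeGES sV sE ≤ g₂.sizeGES sV sE := by
  obtain ⟨ψ, hψ, hV, hE⟩ := h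
  rw [size_eq hg₁ hg₂ hψ sV sE]
  apply add_le_add
  · exact Finset.sum_le_sum fun v hv => hVS1 _ _ (hV v hv)
  · refine Finset.sum_le_sum fun e he => ?_
    induction e using Sym2.ind with
    | _ u v =>
      obtain ⟨hu, hv, huv⟩ := (mem_edges_iff hg₂).1 he
      simp only [Sym2.map_pair_eq]
      exact hES1 _ _ (hE u hu v hv huv)

lemma iso_of_size_eq {g₁ g₂ : LGraph LV LE} (hg₁ : g₁.IsCompleteN n)
    (hg₂ : g₂.IsCompleteN n)
    (hVS1 : ∀ a b, leV a b → sV a ≤ sV b) (hES1 : ∀ a b, leE a b → sE a ≤ sE b)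
    (hVS2 : ∀ a b, leV a b → sV a = sV b → a = b)
    (hES2 : ∀ a b, leE a b → sE a = sE b → a = b)
    (h : Sub leV leE g₁ g₂) (heq : g₁.sizeGES sV sE = g₂.sizeGES sV sE) :
    g₁.Iso g₂ := by
  obtain ⟨ψ, hψ, hV, hE⟩ := h
  rw [size_eq hg₁ hg₂ hψ sV sE] at heq
  have hVle : ∀ v ∈ g₂.verts, sV (g₁.ℓV (ψ v)) ≤ sV (g₂.ℓV v) :=
    fun v hv => hVS1 _ _ (hV v hv)
  have hEle : ∀ e ∈ g₂.edges, sE (g₁.ℓE (e.map ψ)) ≤ sE (g₂.ℓE e) := by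
    intro e he
    induction e using Sym2.ind with
    | _ u v =>
      obtain ⟨hu, hv, huv⟩ := (mem_edges_iff hg₂).1 he
      simp only [Sym2.map_pair_eq]
      exact hES1 _ _ (hE u hu v hv huv)
  have h1 : ∑ v ∈ g₂.verts, sV (g₁.ℓV (ψ v)) ≤ ∑ v ∈ g₂.verts, sV (g₂.ℓV v) :=
    Finset.sum_le_sum hVle
  have h2 : ∑ e ∈ g₂.edges, sE (g₁.ℓE (e.map ψ)) ≤ ∑ e ∈ g₂.edges, sE (g₂.ℓE e) :=
    Finset.sum_le_sum hEle
  have heq1 : ∑ v ∈ g₂.verts, sV (g₁.ℓV (ψ v)) = ∑ v ∈ g₂.verts, sV (g₂.ℓV v) := by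
    unfold LGraph.sizeGES at heq; linarith
  have heq2 : ∑ e ∈ g₂.edges, sE (g₁.ℓE (e.map ψ)) = ∑ e ∈ g₂.edges, sE (g₂.ℓE e) := by
    unfold LGraph.sizeGES at heq; linarith
  have hVeq := (Finset.sum_eq_sum_iff_of_le hVle).1 heq1
  have hEeq := (Finset.sum_eq_sum_iff_of_le hEle).1 heq2
  refine iso_of_labels hg₁ hg₂ hψ ?_ ?_
  · exact fun v hv => hVS2 _ _ (hV v hv) (hVeq v hv)
  · intro u hu v hv huv
    have he : s(u, v) ∈ g₂.edges := (mem_edges_iff hg₂).2 ⟨hu, hv, huv⟩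
    have := hEeq _ he
    simp only [Sym2.map_pair_eq] at this
    exact hES2 _ _ (hE u hu v hv huv) this

lemma sub_refl (hVrefl : ∀ a, leV a a) (hErefl : ∀ a, leE a a)
    (g : LGraph LV LE) : Sub leV leE g g :=
  ⟨id, Set.bijOn_id _, fun v _ => hVrefl _, fun u _ v _ _ => hErefl _⟩

lemma sub_trans (hVtrans : ∀ a b c, leV a b → leV b c → leV a c)
    (hEtrans : ∀ a b c, leE a b → leE b c → leE a c)
    {g₁ g₂ g₃ : LGraph LV LE} (h12 : Sub leV leE g₁ g₂)
    (h23 : Sub leV leE g₂ g₃) : Sub leV leE g₁ g₃ := by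
  obtain ⟨ψ, hψ, hV, hE⟩ := h12
  obtain ⟨χ, hχ, hV', hE'⟩ := h23
  refine ⟨fun v => ψ (χ v), hψ.comp hχ, ?_, ?_⟩
  · exact fun v hv => hVtrans _ _ _ (hV (χ v) (hχ.mapsTo hv)) (hV' v hv)
  · intro u hu v hv huv
    have hne : χ u ≠ χ v := fun h => huv (hχ.injOn hu hv h)
    exact hEtrans _ _ _ (hE (χ u) (hχ.mapsTo hu) (χ v) (hχ.mapsTo hv) hne)
      (hE' u hu v hv huv)

end LGraphAux


end AuxLemmas

/-- if `(G, ⊆ₑ, s_{GES})` is an E-MCS Model with respect to MCS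
Models `M_V = (LV, ≼_V, s_V)` and `M_E = (LE, ≼_E, s_E)` with strictly
positive size functions, and `n ≥ 1`, then the restriction of `(⊆ₑ, s_{GES})`
to the subset `K_n ⊆ G` of complete graphs with exactly `n` vertices is again
an MCS Model (with isomorphic graphs identified, so equality in the order
axioms and in (S2) becomes isomorphism): `≼_{K_n}` is a partial order,
`s_{K_n}` satisfies (S1) and (S2), any two elements of `K_n` have a common
subelement in `K_n` of maximal size (A1), and the diamond inequality (A2)
holds within `K_n`. -/

theorem restricted_emcs_model_is_mcs_model (LV LE : Type) (n : ℕ) (hn : 1 ≤ n)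
    -- `M_V` is an MCS Model on `LV` with strictly positive size function
    (leV : LV → LV → Prop)
    (hVrefl : ∀ a, leV a a)
    (hVtrans : ∀ a b c, leV a b → leV b c → leV a c)
    (hVantisymm : ∀ a b, leV a b → leV b a → a = b)
    (sV : LV → ℝ) (hsV : ∀ a, 0 < sV a)
    (hVS1 : ∀ a b, leV a b → sV a ≤ sV b)
    (hVS2 : ∀ a b, leV a b → sV a = sV b → a = b)
    (s'V : LV → LV → ℝ)
    (hVA1 : ∀ a b, IsGreatest {t : ℝ | ∃ c, leV c a ∧ leV c b ∧ sV c = t} (s'V a b))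
    (hVA2 : ∀ a b c, leV a c → leV b c → ∃ d, leV d a ∧ leV d b ∧ sV a + sV b - sV d ≤ sV c)
    -- `M_E` is an MCS Model on `LE` with strictly positive size function
    (leE : LE → LE → Prop)
    (hErefl : ∀ a, leE a a)
    (hEtrans : ∀ a b c, leE a b → leE b c → leE a c)
    (hEantisymm : ∀ a b, leE a b → leE b a → a = b)
    (sE : LE → ℝ) (hsE : ∀ a, 0 < sE a)
    (hES1 : ∀ a b, leE a b → sE a ≤ sE b)
    (hES2 : ∀ a b, leE a b → sE a = sE b → a = b)
    (s'E : LE → LE → ℝ)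
    (hEA1 : ∀ a b, IsGreatest {t : ℝ | ∃ c, leE c a ∧ leE c b ∧ sE c = t} (s'E a b))
    (hEA2 : ∀ a b c, leE a c → leE b c → ∃ d, leE d a ∧ leE d b ∧ sE a + sE b - sE d ≤ sE c) :
    -- `≼_{K_n}` is a partial order on `K_n` (antisymmetry up to isomorphism)
    (∀ g : LGraph LV LE, g.IsCompleteN n →
      LGraph.ExtSubIso leV leE g g) ∧
    (∀ g₁ g₂ g₃ : LGraph LV LE, g₁.IsCompleteN n → g₂.IsCompleteN n →
      g₃.IsCompleteN n → LGraph.ExtSubIso leV leE g₁ g₂ →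
      LGraph.ExtSubIso leV leE g₂ g₃ → LGraph.ExtSubIso leV leE g₁ g₃) ∧
    (∀ g₁ g₂ : LGraph LV LE, g₁.IsCompleteN n → g₂.IsCompleteN n →
      LGraph.ExtSubIso leV leE g₁ g₂ → LGraph.ExtSubIso leV leE g₂ g₁ →
      g₁.Iso g₂) ∧
    -- (S1)
    (∀ g₁ g₂ : LGraph LV LE, g₁.IsCompleteN n → g₂.IsCompleteN n →
      LGraph.ExtSubIso leV leE g₁ g₂ →
      g₁.sizeGES sV sE ≤ g₂.sizeGES sV sE) ∧
    -- (S2) (up to isomorphism)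
    (∀ g₁ g₂ : LGraph LV LE, g₁.IsCompleteN n → g₂.IsCompleteN n →
      LGraph.ExtSubIso leV leE g₁ g₂ →
      g₁.sizeGES sV sE = g₂.sizeGES sV sE → g₁.Iso g₂) ∧
    -- (A1): any two elements of `K_n` have a common subelement in `K_n`
    -- of maximal size
    (∀ g₁ g₂ : LGraph LV LE, g₁.IsCompleteN n → g₂.IsCompleteN n →
      ∃ g₁₂ : LGraph LV LE, g₁₂.IsCompleteN n ∧
        LGraph.ExtSubIso leV leE g₁₂ g₁ ∧ LGraph.ExtSubIso leV leE g₁₂ g₂ ∧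
        ∀ h : LGraph LV LE, h.IsCompleteN n →
          LGraph.ExtSubIso leV leE h g₁ → LGraph.ExtSubIso leV leE h g₂ →
          h.sizeGES sV sE ≤ g₁₂.sizeGES sV sE) ∧
    -- (A2) within `K_n`
    (∀ g₁ g₂ g : LGraph LV LE, g₁.IsCompleteN n → g₂.IsCompleteN n →
      g.IsCompleteN n → LGraph.ExtSubIso leV leE g₁ g →
      LGraph.ExtSubIso leV leE g₂ g →
      ∃ g₁₂ : LGraph LV LE, g₁₂.IsCompleteN n ∧
        LGraph.ExtSubIso leV leE g₁₂ g₁ ∧ LGraph.ExtSubIso leV leE g₁₂ g₂ ∧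
        g₁.sizeGES sV sE + g₂.sizeGES sV sE - g₁₂.sizeGES sV sE ≤
          g.sizeGES sV sE) := by
  classical
  have toSub : ∀ {g₁ g₂ : LGraph LV LE}, g₁.IsCompleteN n → g₂.IsCompleteN n →
      (LGraph.ExtSubIso leV leE g₁ g₂ ↔ LGraphAux.Sub leV leE g₁ g₂) :=
    fun h1 h2 => LGraphAux.sub_iff_extSubIso h1 h2
  refine ⟨?_, ?_, ?_, ?_, ?_, ?_, ?_⟩
  · -- reflexivity
    intro g hg
    exact (toSub hg hg).2 (LGraphAux.sub_refl hVrefl hErefl g)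
  · -- transitivity
    intro g₁ g₂ g₃ h1 h2 h3 h12 h23
    exact (toSub h1 h3).2 (LGraphAux.sub_trans hVtrans hEtrans ((toSub h1 h2).1 h12)
      ((toSub h2 h3).1 h23))
  · -- antisymmetry up to iso
    intro g₁ g₂ h1 h2 h12 h21
    have hs12 := LGraphAux.size_le h1 h2 hVS1 hES1 ((toSub h1 h2).1 h12)
    have hs21 := LGraphAux.size_le h2 h1 hVS1 hES1 ((toSub h2 h1).1 h21)
    exact LGraphAux.iso_of_size_eq h1 h2 hVS1 hES1 hVS2 hES2 ((toSub h1 h2).1 h12)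
      (le_antisymm hs12 hs21)
  · -- (S1)
    intro g₁ g₂ h1 h2 h12
    exact LGraphAux.size_le h1 h2 hVS1 hES1 ((toSub h1 h2).1 h12)
  · -- (S2)
    intro g₁ g₂ h1 h2 h12 heq
    exact LGraphAux.iso_of_size_eq h1 h2 hVS1 hES1 hVS2 hES2 ((toSub h1 h2).1 h12) heq
  · -- (A1)
    intro g₁ g₂ h1 h2
    let cV : LV → LV → LV := fun a b => (hVA1 a b).1.choose
    have hcV : ∀ a b, leV (cV a b) a ∧ leV (cV a b) b ∧ sV (cV a b) = s'V a b :=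
      fun a b => (hVA1 a b).1.choose_spec
    let cE : LE → LE → LE := fun a b => (hEA1 a b).1.choose
    have hcE : ∀ a b, leE (cE a b) a ∧ leE (cE a b) b ∧ sE (cE a b) = s'E a b :=
      fun a b => (hEA1 a b).1.choose_spec
    haveI : Nonempty ({x // x ∈ g₂.verts} ≃ {x // x ∈ g₁.verts}) := by
      rw [← Fintype.card_eq]
      simp [Fintype.card_coe, h1.1, h2.1]
    let ext : ({x // x ∈ g₂.verts} ≃ {x // x ∈ g₁.verts}) → ℕ → ℕ :=
      fun σ x => if h : x ∈ g₂.verts then (σ ⟨x, h⟩ : ℕ) else 0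
    have hext : ∀ σ (v : ℕ) (hv : v ∈ g₂.verts), ext σ v = σ ⟨v, hv⟩ :=
      fun σ v hv => dif_pos hv
    have hbij : ∀ σ, Set.BijOn (ext σ) ↑g₂.verts ↑g₁.verts := by
      intro σ
      refine ⟨?_, ?_, ?_⟩
      · intro v hv
        simp only [Finset.mem_coe] at hv ⊢
        rw [hext σ v hv]; exact (σ ⟨v, hv⟩).2
      · intro u hu v hv huv
        simp only [Finset.mem_coe] at hu hv
        rw [hext σ u hu, hext σ v hv] at huv
        exact congrArg Subtype.val (σ.injective (Subtype.ext huv))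
      · intro w hw
        simp only [Finset.mem_coe] at hw
        refine ⟨(σ.symm ⟨w, hw⟩ : ℕ), (σ.symm ⟨w, hw⟩).2, ?_⟩
        rw [hext σ _ (σ.symm ⟨w, hw⟩).2]
        simp
    let F : ({x // x ∈ g₂.verts} ≃ {x // x ∈ g₁.verts}) → ℝ := fun σ =>
      ∑ v ∈ g₂.verts, s'V (g₁.ℓV (ext σ v)) (g₂.ℓV v)
        + ∑ e ∈ g₂.edges, s'E (g₁.ℓE (e.map (ext σ))) (g₂.ℓE e)
    obtain ⟨σ₀, hσ₀⟩ := Finite.exists_max F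
    let ψ := ext σ₀
    let g₁₂ : LGraph LV LE := ⟨g₂.verts, g₂.edges, g₂.edges_sub, g₂.edges_nodiag,
      fun v => cV (g₁.ℓV (ψ v)) (g₂.ℓV v),
      fun e => cE (g₁.ℓE (e.map ψ)) (g₂.ℓE e)⟩
    have h12c : g₁₂.IsCompleteN n := ⟨h2.1, h2.2⟩
    let χ := Function.invFunOn ψ ↑g₂.verts
    have hinv : Set.InvOn χ ψ ↑g₂.verts ↑g₁.verts := (hbij σ₀).invOn_invFunOn
    have hbijχ : Set.BijOn χ ↑g₁.verts ↑g₂.verts := Set.BijOn.symm hinv.symm (hbij σ₀)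
    have hfix : ∀ w ∈ g₁.verts, ψ (χ w) = w := fun w hw => hinv.2 hw
    have hsub1 : LGraphAux.Sub leV leE g₁₂ g₁ := by
      refine ⟨χ, hbijχ, ?_, ?_⟩
      · intro w hw
        show leV (cV (g₁.ℓV (ψ (χ w))) (g₂.ℓV (χ w))) (g₁.ℓV w)
        rw [hfix w hw]
        exact (hcV _ _).1
      · intro u hu v hv huv
        show leE (cE (g₁.ℓE (Sym2.map ψ s(χ u, χ v))) (g₂.ℓE s(χ u, χ v))) (g₁.ℓE s(u, v))
        rw [Sym2.map_pair_eq, hfix u hu, hfix v hv]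
        exact (hcE _ _).1
    have hsub2 : LGraphAux.Sub leV leE g₁₂ g₂ :=
      ⟨id, Set.bijOn_id _, fun v _ => (hcV _ _).2.1, fun u _ v _ _ => (hcE _ _).2.1⟩
    have hsize12 : g₁₂.sizeGES sV sE = F σ₀ := by
      unfold LGraph.sizeGES
      congr 1
      · exact Finset.sum_congr rfl fun v _ => (hcV _ _).2.2
      · exact Finset.sum_congr rfl fun e _ => (hcE _ _).2.2
    refine ⟨g₁₂, h12c, (toSub h12c h1).2 hsub1, (toSub h12c h2).2 hsub2, ?_⟩
    intro h hh hh1 hh2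
    obtain ⟨α, hα, hαV, hαE⟩ := (toSub hh h1).1 hh1
    obtain ⟨β, hβ, hβV, hβE⟩ := (toSub hh h2).1 hh2
    let invα := Function.invFunOn α ↑g₁.verts
    have hinvα : Set.InvOn invα α ↑g₁.verts ↑h.verts := hα.invOn_invFunOn
    have hαinvα : ∀ w ∈ h.verts, α (invα w) = w := fun w hw => hinvα.2 hw
    have hinvαα : ∀ w ∈ g₁.verts, invα (α w) = w := fun w hw => hinvα.1 hw
    have hmem : ∀ v ∈ g₂.verts, invα (β v) ∈ g₁.verts := fun v hv =>
      (Set.BijOn.symm hinvα.symm hα).mapsTo (hβ.mapsTo hv)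
    let f : {x // x ∈ g₂.verts} → {x // x ∈ g₁.verts} :=
      fun x => ⟨invα (β x), hmem x x.2⟩
    have hfbij : Function.Bijective f := by
      constructor
      · intro x y hxy
        have h1' : invα (β ↑x) = invα (β ↑y) := congrArg Subtype.val hxy
        have h2' : β ↑x = β ↑y := by
          have hx := hαinvα (β ↑x) (hβ.mapsTo x.2)
          have hy := hαinvα (β ↑y) (hβ.mapsTo y.2)
          rw [← hx, ← hy, h1']
        exact Subtype.ext (hβ.injOn x.2 y.2 h2')
      · intro w
        obtain ⟨v, hv, hveq⟩ := hβ.surjOn (hα.mapsTo w.2)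
        refine ⟨⟨v, hv⟩, Subtype.ext ?_⟩
        show invα (β v) = ↑w
        rw [hveq, hinvαα ↑w w.2]
    let σ' := Equiv.ofBijective f hfbij
    have hext' : ∀ v (hv : v ∈ g₂.verts), ext σ' v = invα (β v) := by
      intro v hv; rw [hext σ' v hv]; rfl
    have hsize : h.sizeGES sV sE ≤ F σ' := by
      rw [LGraphAux.size_eq hh h2 hβ sV sE]
      apply add_le_add
      · refine Finset.sum_le_sum fun v hv => ?_
        refine (hVA1 _ _).2 ⟨h.ℓV (β v), ?_, hβV v hv, rfl⟩
        rw [hext' v hv]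
        have := hαV (invα (β v)) (hmem v hv)
        rwa [hαinvα (β v) (hβ.mapsTo hv)] at this
      · refine Finset.sum_le_sum fun e he => ?_
        induction e using Sym2.ind with
        | _ u v =>
          obtain ⟨hu, hv, huv⟩ := (LGraphAux.mem_edges_iff h2).1 he
          simp only [Sym2.map_pair_eq]
          refine (hEA1 _ _).2 ⟨h.ℓE s(β u, β v), ?_, hβE u hu v hv huv, rfl⟩
          rw [hext' u hu, hext' v hv]
          have hne : invα (β u) ≠ invα (β v) := by
            intro hcon
            apply huv
            apply hβ.injOn hu hv
            have hx := hαinvα (β u) (hβ.mapsTo hu)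
            have hy := hαinvα (β v) (hβ.mapsTo hv)
            rw [← hx, ← hy, hcon]
          have := hαE (invα (β u)) (hmem u hu) (invα (β v)) (hmem v hv) hne
          rwa [hαinvα (β u) (hβ.mapsTo hu), hαinvα (β v) (hβ.mapsTo hv)] at this
    rw [hsize12]
    exact hsize.trans (hσ₀ σ')
  · -- (A2)
    intro g₁ g₂ g h1 h2 hgc hs1 hs2
    obtain ⟨ψ₁, hψ₁, hV₁, hE₁⟩ := (toSub h1 hgc).1 hs1
    obtain ⟨ψ₂, hψ₂, hV₂, hE₂⟩ := (toSub h2 hgc).1 hs2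
    have hE₁' : ∀ e ∈ g.edges, leE (g₁.ℓE (e.map ψ₁)) (g.ℓE e) := by
      intro e he
      induction e using Sym2.ind with
      | _ u v =>
        obtain ⟨hu, hv, huv⟩ := (LGraphAux.mem_edges_iff hgc).1 he
        simp only [Sym2.map_pair_eq]
        exact hE₁ u hu v hv huv
    have hE₂' : ∀ e ∈ g.edges, leE (g₂.ℓE (e.map ψ₂)) (g.ℓE e) := by
      intro e he
      induction e using Sym2.ind with
      | _ u v =>
        obtain ⟨hu, hv, huv⟩ := (LGraphAux.mem_edges_iff hgc).1 he
        simp only [Sym2.map_pair_eq]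
        exact hE₂ u hu v hv huv
    let dV : ℕ → LV := fun v =>
      if hv : v ∈ g.verts then (hVA2 _ _ _ (hV₁ v hv) (hV₂ v hv)).choose else g₁.ℓV v
    have hdV : ∀ v ∈ g.verts, leV (dV v) (g₁.ℓV (ψ₁ v)) ∧ leV (dV v) (g₂.ℓV (ψ₂ v)) ∧
        sV (g₁.ℓV (ψ₁ v)) + sV (g₂.ℓV (ψ₂ v)) - sV (dV v) ≤ sV (g.ℓV v) := by
      intro v hv
      have hrw : dV v = (hVA2 _ _ _ (hV₁ v hv) (hV₂ v hv)).choose := dif_pos hv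
      rw [hrw]
      exact (hVA2 _ _ _ (hV₁ v hv) (hV₂ v hv)).choose_spec
    let dE : Sym2 ℕ → LE := fun e =>
      if he : e ∈ g.edges then (hEA2 _ _ _ (hE₁' e he) (hE₂' e he)).choose else g₁.ℓE e
    have hdE : ∀ e ∈ g.edges, leE (dE e) (g₁.ℓE (e.map ψ₁)) ∧
        leE (dE e) (g₂.ℓE (e.map ψ₂)) ∧
        sE (g₁.ℓE (e.map ψ₁)) + sE (g₂.ℓE (e.map ψ₂)) - sE (dE e) ≤ sE (g.ℓE e) := by
      intro e he
      have hrw : dE e = (hEA2 _ _ _ (hE₁' e he) (hE₂' e he)).choose := dif_pos he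
      rw [hrw]
      exact (hEA2 _ _ _ (hE₁' e he) (hE₂' e he)).choose_spec
    let g₁₂ : LGraph LV LE := ⟨g.verts, g.edges, g.edges_sub, g.edges_nodiag, dV, dE⟩
    have h12c : g₁₂.IsCompleteN n := ⟨hgc.1, hgc.2⟩
    -- Sub g₁₂ g₁
    have hsub1 : LGraphAux.Sub leV leE g₁₂ g₁ := by
      let χ := Function.invFunOn ψ₁ ↑g.verts
      have hinv : Set.InvOn χ ψ₁ ↑g.verts ↑g₁.verts := hψ₁.invOn_invFunOn
      have hbijχ : Set.BijOn χ ↑g₁.verts ↑g.verts := Set.BijOn.symm hinv.symm hψ₁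
      have hfix : ∀ w ∈ g₁.verts, ψ₁ (χ w) = w := fun w hw => hinv.2 hw
      refine ⟨χ, hbijχ, ?_, ?_⟩
      · intro w hw
        have hχw : χ w ∈ g.verts := hbijχ.mapsTo hw
        have := (hdV _ hχw).1
        show leV (dV (χ w)) (g₁.ℓV w)
        rwa [hfix w hw] at this
      · intro u hu v hv huv
        have hχu : χ u ∈ g.verts := hbijχ.mapsTo hu
        have hχv : χ v ∈ g.verts := hbijχ.mapsTo hv
        have hne : χ u ≠ χ v := fun hc => huv (hbijχ.injOn hu hv hc)
        have hmem : s(χ u, χ v) ∈ g.edges := (LGraphAux.mem_edges_iff hgc).2 ⟨hχu, hχv, hne⟩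
        have := (hdE _ hmem).1
        rw [Sym2.map_pair_eq, hfix u hu, hfix v hv] at this
        exact this
    have hsub2 : LGraphAux.Sub leV leE g₁₂ g₂ := by
      let χ := Function.invFunOn ψ₂ ↑g.verts
      have hinv : Set.InvOn χ ψ₂ ↑g.verts ↑g₂.verts := hψ₂.invOn_invFunOn
      have hbijχ : Set.BijOn χ ↑g₂.verts ↑g.verts := Set.BijOn.symm hinv.symm hψ₂
      have hfix : ∀ w ∈ g₂.verts, ψ₂ (χ w) = w := fun w hw => hinv.2 hw
      refine ⟨χ, hbijχ, ?_, ?_⟩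
      · intro w hw
        have hχw : χ w ∈ g.verts := hbijχ.mapsTo hw
        have := (hdV _ hχw).2.1
        show leV (dV (χ w)) (g₂.ℓV w)
        rwa [hfix w hw] at this
      · intro u hu v hv huv
        have hχu : χ u ∈ g.verts := hbijχ.mapsTo hu
        have hχv : χ v ∈ g.verts := hbijχ.mapsTo hv
        have hne : χ u ≠ χ v := fun hc => huv (hbijχ.injOn hu hv hc)
        have hmem : s(χ u, χ v) ∈ g.edges := (LGraphAux.mem_edges_iff hgc).2 ⟨hχu, hχv, hne⟩
        have := (hdE _ hmem).2.1
        rw [Sym2.map_pair_eq, hfix u hu, hfix v hv] at this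
        exact this
    refine ⟨g₁₂, h12c, (toSub h12c h1).2 hsub1, (toSub h12c h2).2 hsub2, ?_⟩
    have hsize12 : g₁₂.sizeGES sV sE
        = ∑ v ∈ g.verts, sV (dV v) + ∑ e ∈ g.edges, sE (dE e) := rfl
    calc g₁.sizeGES sV sE + g₂.sizeGES sV sE - g₁₂.sizeGES sV sE
        = ∑ v ∈ g.verts, (sV (g₁.ℓV (ψ₁ v)) + sV (g₂.ℓV (ψ₂ v)) - sV (dV v))
          + ∑ e ∈ g.edges,
            (sE (g₁.ℓE (e.map ψ₁)) + sE (g₂.ℓE (e.map ψ₂)) - sE (dE e)) := by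
          rw [LGraphAux.size_eq h1 hgc hψ₁ sV sE, LGraphAux.size_eq h2 hgc hψ₂ sV sE, hsize12]
          simp only [Finset.sum_sub_distrib, Finset.sum_add_distrib]
          ring
      _ ≤ ∑ v ∈ g.verts, sV (g.ℓV v) + ∑ e ∈ g.edges, sE (g.ℓE e) :=
          add_le_add (Finset.sum_le_sum fun v hv => (hdV v hv).2.2)
            (Finset.sum_le_sum fun e he => (hdE e he).2.2)
      _ = g.sizeGES sV sE := rfl
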